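/- Let $E$ be a real inner product space, let $N, D$ be natural numbers with $1 \le D < N$, and let $k^- < 0$ be a real number with $|k^-| > D/(N-D)$. Then there exists a constant $C > 0$ (depending only on $N$, $D$ and $k^-$) such that for all vectors $u_1, \dots, u_N \in E$: $\sum_{l=1}^{D} \|u_l\|^2 + |k^-| \sum_{l=D+1}^{N} \|u_l\|^2 - \frac{2}{N-D} \sum_{j=1}^{D} \sum_{l=D+1}^{N} \langle u_j, u_l \rangle \;\ge\; C \sum_{l=1}^{N} \|u_l\|^2$. -/

import Mathlib

/-!
Summing the cross terms first turns them into `(2 / (N - D)) ⟪∑_{j ≤ D} u j, ∑_{l > D} u l⟫`.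
Weighted Young and Cauchy–Schwarz for the two block sums bound this by `ε r S₁ + ε⁻¹ S₂`, where
`r = D / (N - D)` and `S₁`, `S₂` are the squared norms of the two blocks. The choice
`ε = 2 / (|k⁻| + r)` leaves the coefficients `(|k⁻| - r) / (|k⁻| + r)` and `(|k⁻| - r) / 2`,
both positive exactly when `|k⁻| > r`.
-/

open RealInnerProductSpace Finset

theorem Finset.sum_Icc_consecutive {M : Type*} [AddCommMonoid M] (f : ℕ → M) {m n k : ℕ}
    (hmn : m ≤ n + 1) (hnk : n ≤ k) :
    ∑ i ∈ Icc m n, f i + ∑ i ∈ Icc (n + 1) k, f i = ∑ i ∈ Icc m k, f i := by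
  simp only [← Ico_add_one_right_eq_Icc]
  exact sum_Ico_consecutive f hmn (by omega)

theorem norm_sum_sq_le_card_mul {F ι : Type*} [SeminormedAddCommGroup F] (s : Finset ι)
    (u : ι → F) : ‖∑ i ∈ s, u i‖ ^ 2 ≤ #s * ∑ i ∈ s, ‖u i‖ ^ 2 :=
  (pow_le_pow_left₀ (norm_nonneg _) (norm_sum_le s u) 2).trans (sq_sum_le_card_mul_sum_sq ..)

section
variable {E : Type*} [NormedAddCommGroup E] [InnerProductSpace ℝ E]

theorem two_mul_real_inner_le {ε : ℝ} (hε : 0 < ε) (x y : E) :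
    2 * ⟪x, y⟫ ≤ ε * ‖x‖ ^ 2 + ε⁻¹ * ‖y‖ ^ 2 := by
  have h := norm_sub_sq_real (ε • x) y
  rw [real_inner_smul_left, norm_smul, Real.norm_of_nonneg hε.le] at h
  calc 2 * ⟪x, y⟫ ≤ ((ε * ‖x‖) ^ 2 + ‖y‖ ^ 2) / ε := by
        rw [le_div_iff₀ hε]
        linarith [sq_nonneg ‖ε • x - y‖]
    _ = ε * ‖x‖ ^ 2 + ε⁻¹ * ‖y‖ ^ 2 := by field_simp

theorem two_mul_sum_sum_inner_le {ι κ : Type*} (s : Finset ι) (t : Finset κ) (u : ι → E)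
    (v : κ → E) {ε : ℝ} (hε : 0 < ε) :
    2 * ∑ i ∈ s, ∑ j ∈ t, ⟪u i, v j⟫
      ≤ ε * (#s * ∑ i ∈ s, ‖u i‖ ^ 2) + ε⁻¹ * (#t * ∑ j ∈ t, ‖v j‖ ^ 2) := by
  calc 2 * ∑ i ∈ s, ∑ j ∈ t, ⟪u i, v j⟫ = 2 * ⟪∑ i ∈ s, u i, ∑ j ∈ t, v j⟫ := by
        rw [sum_inner]
        simp only [inner_sum]
    _ ≤ ε * ‖∑ i ∈ s, u i‖ ^ 2 + ε⁻¹ * ‖∑ j ∈ t, v j‖ ^ 2 := two_mul_real_inner_le hε _ _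
    _ ≤ _ := by gcongr <;> exact norm_sum_sq_le_card_mul _ _

theorem le_sum_sq_add_mul_sum_sq_sub_sum_sum_inner {ι κ : Type*} (s : Finset ι) (t : Finset κ)
    (u : ι → E) (v : κ → E) (ht : t.Nonempty) {a : ℝ} (ha : (#s : ℝ) / #t < a) :
    (a - #s / #t) / (a + #s / #t) * ∑ i ∈ s, ‖u i‖ ^ 2 + (a - #s / #t) / 2 * ∑ j ∈ t, ‖v j‖ ^ 2
      ≤ ∑ i ∈ s, ‖u i‖ ^ 2 + a * ∑ j ∈ t, ‖v j‖ ^ 2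
        - 2 / #t * ∑ i ∈ s, ∑ j ∈ t, ⟪u i, v j⟫ := by
  set r : ℝ := #s / #t with hr_def
  have hcard : (0 : ℝ) < #t := by exact_mod_cast ht.card_pos
  have har : 0 < a + r := by linarith [show 0 ≤ r by positivity]
  have hcross := two_mul_sum_sum_inner_le s t u v (ε := 2 / (a + r)) (by positivity)
  rw [inv_div] at hcross
  set S₁ := ∑ i ∈ s, ‖u i‖ ^ 2
  set S₂ := ∑ j ∈ t, ‖v j‖ ^ 2
  set X := ∑ i ∈ s, ∑ j ∈ t, ⟪u i, v j⟫
  have hX : 2 / #t * X ≤ 2 * r / (a + r) * S₁ + (a + r) / 2 * S₂ :=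
    calc 2 / #t * X = 2 * X / #t := by ring
      _ ≤ (2 / (a + r) * (#s * S₁) + (a + r) / 2 * (#t * S₂)) / #t := by gcongr
      _ = 2 * r / (a + r) * S₁ + (a + r) / 2 * S₂ := by rw [hr_def]; field_simp
  have hcoef : (a - r) / (a + r) = 1 - 2 * r / (a + r) := by field_simp; ring
  rw [hcoef]
  linarith

end

theorem stmt_1 {E : Type*} [NormedAddCommGroup E] [InnerProductSpace ℝ E]
    (N D : ℕ) (hDN : D < N)
    (kneg : ℝ)
    (hbig : |kneg| > (D : ℝ) / ((N : ℝ) - (D : ℝ))) :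
    ∃ C : ℝ, 0 < C ∧ ∀ u : ℕ → E,
      (∑ l ∈ Finset.Icc 1 D, ‖u l‖ ^ 2)
        + |kneg| * (∑ l ∈ Finset.Icc (D + 1) N, ‖u l‖ ^ 2)
        - (2 / ((N : ℝ) - (D : ℝ))) *
            (∑ j ∈ Finset.Icc 1 D, ∑ l ∈ Finset.Icc (D + 1) N, ⟪u j, u l⟫)
      ≥ C * ∑ l ∈ Finset.Icc 1 N, ‖u l‖ ^ 2 := by
  have hcardA : ((#(Icc 1 D) : ℕ) : ℝ) = D := by simp
  have hcardB : ((#(Icc (D + 1) N) : ℕ) : ℝ) = N - D := by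
    rw [Nat.card_Icc, Nat.add_sub_add_right, Nat.cast_sub hDN.le]
  set a := |kneg|
  set r := (D : ℝ) / (N - D)
  have hr : 0 ≤ r := div_nonneg D.cast_nonneg (sub_pos.2 (by exact_mod_cast hDN)).le
  refine ⟨min ((a - r) / (a + r)) ((a - r) / 2),
    lt_min (div_pos (by linarith) (by linarith)) (by linarith), fun u => ?_⟩
  have hblock := le_sum_sq_add_mul_sum_sq_sub_sum_sum_inner (Icc 1 D) (Icc (D + 1) N) u u
    (nonempty_Icc.2 hDN) (a := a) (by rwa [hcardA, hcardB])
  rw [hcardA, hcardB] at hblock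
  rw [← sum_Icc_consecutive _ (by omega : 1 ≤ D + 1) hDN.le, mul_add, ge_iff_le]
  refine le_trans ?_ hblock
  gcongr
  exacts [min_le_left _ _, min_le_right _ _]
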